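/- arXiv:1710.03352 — 6 statements merged into one kernel-verified Lean document; each statement's English description precedes it below -/
import Mathlib

section
/- In a demonic refinement algebra with conjunctive sequential composition, finite iteration equals the choice over all finite powers: c⋆ = ⊓_{i∈ℕ} c^i. -/
/-- A Demonic Refinement Algebra over a complete distributive lattice of
commands, ordered by refinement (`c ⊑ d ↔ c ⊓ d = c`, i.e. `c ≤ d`).
Nondeterministic choice is the lattice meet `⊓`/`sInf`. -/
structure DRA (C : Type*) [CompleteLattice C] where
  seq : C → C → C
  nil : C
  seq_assoc : ∀ a b c : C, seq (seq a b) c = seq a (seq b c)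
  seq_nil : ∀ c : C, seq c nil = c
  nil_seq : ∀ c : C, seq nil c = c
  bot_seq : ∀ c : C, seq ⊥ c = ⊥
  /-- `;` distributes over arbitrary choices from the right -/
  seq_sInf_right : ∀ (S : Set C) (d : C), seq (sInf S) d = ⨅ c ∈ S, seq c d
  /-- `;` distributes over non-empty choices from the left (conjunctivity) -/
  seq_sInf_left : ∀ (c : C) (S : Set C), S.Nonempty → seq c (sInf S) = ⨅ d ∈ S, seq c d
  /-- the lattice of commands is distributive -/
  inf_sup_distrib : ∀ a b c : C, a ⊓ (b ⊔ c) = (a ⊓ b) ⊔ (a ⊓ c)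

namespace DRA

variable {C : Type*} [CompleteLattice C] (A : DRA C)

theorem seq_mono_right (c : C) : Monotone (A.seq c) := by
  intro x y h
  have hs : sInf ({x, y} : Set C) = x := by
    simp [sInf_insert, inf_eq_left.mpr h]
  have hd := A.seq_sInf_left c {x, y} ⟨x, by simp⟩
  rw [hs, iInf_pair] at hd
  rw [hd]
  exact inf_le_right

/-- the function `x ↦ nil ⊓ c;x` as a monotone map -/
def iterFun (c : C) : C →o C :=
  ⟨fun x => A.nil ⊓ A.seq c x, fun _ _ h => inf_le_inf_left _ (A.seq_mono_right c h)⟩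

/-- finite iteration `c⋆`, the greatest fixed point of `x ↦ nil ⊓ c;x` -/
def fiter (c : C) : C := OrderHom.gfp (A.iterFun c)

/-- omega iteration `c^ω`, the least fixed point of `x ↦ nil ⊓ c;x` -/
def omega (c : C) : C := OrderHom.lfp (A.iterFun c)

/-- infinite iteration `c^∞ = c^ω ; ⊤` -/
def infIter (c : C) : C := A.seq (A.omega c) ⊤

/-- finite powers: `c^0 = nil`, `c^(i+1) = c ; c^i` -/
def pow (c : C) : ℕ → C
  | 0 => A.nil
  | n + 1 => A.seq c (pow c n)

end DRA

/-- Finite iteration is the choice over all finite powers: `c⋆ = ⊓_{i∈ℕ} c^i`. -/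
theorem fiter_eq_iInf_pow {C : Type*} [CompleteLattice C] (A : DRA C) (c : C) :
    A.fiter c = ⨅ i : ℕ, A.pow c i := by
  apply le_antisymm
  · apply le_iInf
    intro i
    induction i with
    | zero =>
      have h := (OrderHom.isFixedPt_gfp (A.iterFun c))
      calc A.fiter c = A.nil ⊓ A.seq c (A.fiter c) := h.symm
        _ ≤ A.pow c 0 := inf_le_left
    | succ n ih =>
      have h := (OrderHom.isFixedPt_gfp (A.iterFun c))
      calc A.fiter c = A.nil ⊓ A.seq c (A.fiter c) := h.symm
        _ ≤ A.seq c (A.fiter c) := inf_le_right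
        _ ≤ A.seq c (A.pow c n) := A.seq_mono_right c ih
  · apply OrderHom.le_gfp
    have hdist : A.seq c (⨅ i : ℕ, A.pow c i) = ⨅ i : ℕ, A.seq c (A.pow c i) := by
      rw [iInf, A.seq_sInf_left c _ (Set.range_nonempty _), iInf_range]
    show (⨅ i : ℕ, A.pow c i) ≤ A.nil ⊓ A.seq c (⨅ i : ℕ, A.pow c i)
    rw [hdist]
    refine le_inf (iInf_le _ 0) (le_iInf fun n => iInf_le _ (n + 1))
end

section
/- Assertions and tests form a Galois connection: for any test t and commands c, d, {t};c ⊑ d if and only if c ⊑ t;d, where the assertion {t} := t ⊓ ¬t;⊥. -/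
/-- A DRA extended with a Boolean sub-algebra of tests, with least element
`nil` and greatest element `⊤`, satisfying the test interchange axiom. -/
structure TestDRA (C : Type*) [CompleteLattice C] extends DRA C where
  Test : Set C
  nil_test : nil ∈ Test
  top_test : (⊤ : C) ∈ Test
  test_inf : ∀ t ∈ Test, ∀ t' ∈ Test, t ⊓ t' ∈ Test
  test_sup : ∀ t ∈ Test, ∀ t' ∈ Test, t ⊔ t' ∈ Test
  tneg : C → C
  tneg_test : ∀ t ∈ Test, tneg t ∈ Test
  nil_le_test : ∀ t ∈ Test, nil ≤ t
  tneg_sup : ∀ t ∈ Test, t ⊔ tneg t = ⊤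
  tneg_inf : ∀ t ∈ Test, t ⊓ tneg t = nil
  /-- test interchange axiom: `(t;c) ⊔ (t';d) = (t ⊔ t');(c ⊔ d)` -/
  test_interchange : ∀ t ∈ Test, ∀ t' ∈ Test, ∀ c d : C,
    seq t c ⊔ seq t' d = seq (t ⊔ t') (c ⊔ d)

namespace TestDRA

variable {C : Type*} [CompleteLattice C] (A : TestDRA C)

/-- the assertion `{t} = t ⊓ ¬t;⊥` corresponding to a test `t` -/
def assert (t : C) : C := t ⊓ A.seq (A.tneg t) ⊥

end TestDRA

/-- Assertions and tests form a Galois connection: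
`{t};c ⊑ d ↔ c ⊑ t;d`. -/
theorem assert_galois {C : Type*} [CompleteLattice C] (A : TestDRA C) :
    ∀ t ∈ A.Test, ∀ c d : C,
      A.seq (A.assert t) c ≤ d ↔ c ≤ A.seq t d := by
  intro t ht c d
  -- right distribution over binary meet
  have pairdist : ∀ a b x : C, A.seq (a ⊓ b) x = A.seq a x ⊓ A.seq b x := by
    intro a b x
    have h := A.seq_sInf_right {a, b} x
    rw [sInf_pair, iInf_pair] at h
    exact h
  -- ⊤ ; x = ⊤
  have topseq : ∀ x : C, A.seq ⊤ x = ⊤ := by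
    intro x
    have h := A.seq_sInf_right ∅ x
    simpa using h
  -- for a test t : t ; x = t;⊥ ⊔ x
  have tseq : ∀ t' ∈ A.Test, ∀ x : C, A.seq t' x = A.seq t' ⊥ ⊔ x := by
    intro t' ht' x
    have h := A.test_interchange t' ht' A.nil A.nil_test ⊥ x
    rw [A.nil_seq, sup_eq_left.mpr (A.nil_le_test t' ht'), bot_sup_eq] at h
    exact h.symm
  have hnt := A.tneg_test t ht
  set b : C := A.seq t ⊥ with hb
  set b' : C := A.seq (A.tneg t) ⊥ with hb'
  -- b ⊓ b' = ⊥
  have hbinf : b ⊓ b' = ⊥ := by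
    rw [hb, hb', ← pairdist, A.tneg_inf t ht, A.nil_seq]
  -- b ⊔ b' = ⊤
  have hbsup : b ⊔ b' = ⊤ := by
    have h := A.test_interchange t ht (A.tneg t) hnt ⊥ ⊥
    rw [A.tneg_sup t ht, sup_idem, topseq] at h
    rw [hb, hb', h]
  -- {t};c = (b ⊔ c) ⊓ b'
  have hassert : A.seq (A.assert t) c = (b ⊔ c) ⊓ b' := by
    rw [TestDRA.assert, pairdist, A.seq_assoc, A.bot_seq, ← hb', tseq t ht c, ← hb]
  -- t;d = b ⊔ d
  have htd : A.seq t d = b ⊔ d := by rw [tseq t ht d, ← hb]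
  rw [hassert, htd]
  constructor
  · intro h
    calc c = (b ⊔ b') ⊓ c := by rw [hbsup, top_inf_eq]
    _ = c ⊓ (b ⊔ b') := by rw [inf_comm]
    _ = (c ⊓ b) ⊔ (c ⊓ b') := A.inf_sup_distrib c b b'
    _ ≤ b ⊔ d := by
        apply sup_le_sup inf_le_right
        exact le_trans (inf_le_inf_right b' le_sup_right) h
  · intro h
    calc (b ⊔ c) ⊓ b' ≤ (b ⊔ d) ⊓ b' := by
          exact inf_le_inf_right b' (sup_le le_sup_left h)
    _ = b' ⊓ (b ⊔ d) := by rw [inf_comm]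
    _ = (b' ⊓ b) ⊔ (b' ⊓ d) := A.inf_sup_distrib b' b d
    _ ≤ d := by
        rw [inf_comm b' b, hbinf, bot_sup_eq]
        exact inf_le_right
end

section
/- For atomic steps a, b in the atomic sub-algebra, the conjunction of assumptions equals the assumption of the choice: ⦃a⦄ ⊔ ⦃b⦄ = ⦃a ⊓ b⦄, where ⦃a⦄ := a ⊓ !a;⊥ and !a denotes the Boolean complement of a among atomic steps. -/
/-- A DRA extended with a Boolean sub-algebra of atomic steps, with least
element `alpha` and greatest element `⊤`, satisfying the atomic-step
interchange axiom. -/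
structure AtomicDRA (C : Type*) [CompleteLattice C] extends DRA C where
  Atomic : Set C
  alpha : C
  alpha_atomic : alpha ∈ Atomic
  top_atomic : (⊤ : C) ∈ Atomic
  atomic_inf : ∀ a ∈ Atomic, ∀ b ∈ Atomic, a ⊓ b ∈ Atomic
  atomic_sup : ∀ a ∈ Atomic, ∀ b ∈ Atomic, a ⊔ b ∈ Atomic
  aneg : C → C
  aneg_atomic : ∀ a ∈ Atomic, aneg a ∈ Atomic
  alpha_le : ∀ a ∈ Atomic, alpha ≤ a
  aneg_sup : ∀ a ∈ Atomic, a ⊔ aneg a = ⊤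
  aneg_inf : ∀ a ∈ Atomic, a ⊓ aneg a = alpha
  /-- atomic-step interchange axiom: `(a;c) ⊔ (b;d) = (a ⊔ b);(c ⊔ d)` -/
  atomic_interchange : ∀ a ∈ Atomic, ∀ b ∈ Atomic, ∀ c d : C,
    seq a c ⊔ seq b d = seq (a ⊔ b) (c ⊔ d)

namespace AtomicDRA

variable {C : Type*} [CompleteLattice C] (A : AtomicDRA C)

/-- the assumption command `⦃a⦄ = a ⊓ !a;⊥` for an atomic step `a` -/
def assume (a : C) : C := a ⊓ A.seq (A.aneg a) ⊥

end AtomicDRA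


section Aux
variable {C : Type*} [CompleteLattice C]

/-- dual distributivity derived from `inf_sup_distrib` -/
lemma sup_inf_distrib' (A : AtomicDRA C) (a b c : C) : a ⊔ (b ⊓ c) = (a ⊔ b) ⊓ (a ⊔ c) := by
  have h1 : (a ⊔ b) ⊓ (a ⊔ c) = ((a ⊔ b) ⊓ a) ⊔ ((a ⊔ b) ⊓ c) := A.toDRA.inf_sup_distrib _ _ _
  have h2 : (a ⊔ b) ⊓ a = a := inf_eq_right.mpr le_sup_left
  have h3 : (a ⊔ b) ⊓ c = (c ⊓ a) ⊔ (c ⊓ b) := by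
    rw [inf_comm]; exact A.toDRA.inf_sup_distrib _ _ _
  rw [h1, h2, h3, ← sup_assoc, sup_of_le_left (inf_le_right : c ⊓ a ≤ a), inf_comm]

/-- complements of atomic steps are unique -/
lemma aneg_unique (A : AtomicDRA C) {c x y : C} (hx : x ∈ A.Atomic) (hy : y ∈ A.Atomic)
    (hxs : c ⊔ x = ⊤) (hxi : c ⊓ x = A.alpha)
    (hys : c ⊔ y = ⊤) (hyi : c ⊓ y = A.alpha) : x = y := by
  have key : ∀ u v : C, u ∈ A.Atomic → v ∈ A.Atomic → c ⊔ v = ⊤ → c ⊓ u = A.alpha →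
      u ≤ v := by
    intro u v hu hv hsv hiu
    have : u = A.alpha ⊔ (u ⊓ v) := by
      calc u = u ⊓ (c ⊔ v) := by rw [hsv, inf_top_eq]
        _ = (u ⊓ c) ⊔ (u ⊓ v) := A.toDRA.inf_sup_distrib _ _ _
        _ = A.alpha ⊔ (u ⊓ v) := by rw [inf_comm u c, hiu]
    rw [this]
    exact sup_le (A.alpha_le v hv) inf_le_right
  exact le_antisymm (key x y hx hy hys hxi) (key y x hy hx hxs hyi)

end Aux

/-- Conjoining assumptions: `⦃a⦄ ⊔ ⦃b⦄ = ⦃a ⊓ b⦄`. -/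
theorem conjoin_assumptions {C : Type*} [CompleteLattice C] (A : AtomicDRA C) :
    ∀ a ∈ A.Atomic, ∀ b ∈ A.Atomic,
      A.assume a ⊔ A.assume b = A.assume (a ⊓ b) := by
  intro a ha b hb
  have hna := A.aneg_atomic a ha
  have hnb := A.aneg_atomic b hb
  have hab := A.atomic_inf a ha b hb
  have hnn := A.atomic_sup _ hna _ hnb
  have dL : ∀ x y z : C, x ⊔ (y ⊓ z) = (x ⊔ y) ⊓ (x ⊔ z) := sup_inf_distrib' A
  have dR : ∀ x y z : C, (x ⊓ y) ⊔ z = (x ⊔ z) ⊓ (y ⊔ z) := fun x y z => by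
    rw [sup_comm, sup_inf_distrib' A, sup_comm z x, sup_comm z y]
  have e1 : A.seq (A.aneg a) ⊥ ⊔ A.seq (A.aneg b) ⊥ = A.seq (A.aneg a ⊔ A.aneg b) ⊥ := by
    rw [A.atomic_interchange _ hna _ hnb, sup_idem]
  have e2 : a ⊔ A.seq (A.aneg b) ⊥ = a ⊔ A.aneg b := by
    have := A.atomic_interchange a ha _ hnb A.nil ⊥
    rw [A.seq_nil] at this
    rw [this, sup_eq_left.mpr bot_le, A.seq_nil]
  have e3 : A.seq (A.aneg a) ⊥ ⊔ b = A.aneg a ⊔ b := by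
    have := A.atomic_interchange _ hna b hb ⊥ A.nil
    rw [A.seq_nil] at this
    rw [this, sup_eq_right.mpr bot_le, A.seq_nil]
  have lhs : A.assume a ⊔ A.assume b
      = ((a ⊔ b) ⊓ (a ⊔ A.aneg b) ⊓ (A.aneg a ⊔ b)) ⊓ A.seq (A.aneg a ⊔ A.aneg b) ⊥ := by
    show (a ⊓ A.seq (A.aneg a) ⊥) ⊔ (b ⊓ A.seq (A.aneg b) ⊥) = _
    calc (a ⊓ A.seq (A.aneg a) ⊥) ⊔ (b ⊓ A.seq (A.aneg b) ⊥)
        = ((a ⊓ A.seq (A.aneg a) ⊥) ⊔ b) ⊓ ((a ⊓ A.seq (A.aneg a) ⊥) ⊔ A.seq (A.aneg b) ⊥) :=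
          dL _ _ _
      _ = ((a ⊔ b) ⊓ (A.seq (A.aneg a) ⊥ ⊔ b)) ⊓
            ((a ⊔ A.seq (A.aneg b) ⊥) ⊓ (A.seq (A.aneg a) ⊥ ⊔ A.seq (A.aneg b) ⊥)) := by
          rw [dR, dR]
      _ = ((a ⊔ b) ⊓ (A.aneg a ⊔ b)) ⊓ ((a ⊔ A.aneg b) ⊓ A.seq (A.aneg a ⊔ A.aneg b) ⊥) := by
          rw [e1, e2, e3]
      _ = ((a ⊔ b) ⊓ (a ⊔ A.aneg b) ⊓ (A.aneg a ⊔ b)) ⊓ A.seq (A.aneg a ⊔ A.aneg b) ⊥ := by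
          ac_rfl
  have core : (a ⊔ b) ⊓ (a ⊔ A.aneg b) ⊓ (A.aneg a ⊔ b) = a ⊓ b := by
    have h1 : (a ⊔ b) ⊓ (a ⊔ A.aneg b) = a := by
      rw [← dL, A.aneg_inf b hb, sup_eq_left.mpr (A.alpha_le a ha)]
    rw [h1, A.toDRA.inf_sup_distrib, A.aneg_inf a ha,
        sup_eq_right.mpr (le_trans (A.alpha_le (a ⊓ b) hab) le_rfl)]
  have cs : (a ⊓ b) ⊔ (A.aneg a ⊔ A.aneg b) = ⊤ := by
    rw [dR]
    have h1 : a ⊔ (A.aneg a ⊔ A.aneg b) = ⊤ := by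
      rw [← sup_assoc, A.aneg_sup a ha, top_sup_eq]
    have h2 : b ⊔ (A.aneg a ⊔ A.aneg b) = ⊤ := by
      rw [sup_comm (A.aneg a), ← sup_assoc, A.aneg_sup b hb, top_sup_eq]
    rw [h1, h2, top_inf_eq]
  have ci : (a ⊓ b) ⊓ (A.aneg a ⊔ A.aneg b) = A.alpha := by
    rw [A.toDRA.inf_sup_distrib]
    have h1 : a ⊓ b ⊓ A.aneg a = A.alpha := by
      rw [inf_right_comm, A.aneg_inf a ha, inf_eq_left.mpr (A.alpha_le b hb)]
    have h2 : a ⊓ b ⊓ A.aneg b = A.alpha := by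
      rw [inf_assoc, A.aneg_inf b hb, inf_eq_right.mpr (A.alpha_le a ha)]
    rw [h1, h2, sup_idem]
  have negeq : A.aneg a ⊔ A.aneg b = A.aneg (a ⊓ b) :=
    aneg_unique A hnn (A.aneg_atomic _ hab) cs ci (A.aneg_sup _ hab) (A.aneg_inf _ hab)
  rw [lhs, core, negeq]
  rfl
end

section
/- In a synchronous refinement algebra, for any command c (with c = t', or c = a;c' for atomic a, or 1 ⊑ c where 1 is the identity of ⊗) and test t, commands d: c ⊗ (t;d) = t;(c ⊗ d). -/
/-- A Synchronous Refinement Algebra: a DRA with Boolean sub-algebras of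
atomic steps and tests, and an abstract synchronisation operator `⊗` with
identity command `one` and atomic-step identity `aone`. -/
structure SRA (C : Type*) [CompleteLattice C] extends AtomicDRA C where
  Test : Set C
  nil_test : nil ∈ Test
  top_test : (⊤ : C) ∈ Test
  test_inf : ∀ t ∈ Test, ∀ t' ∈ Test, t ⊓ t' ∈ Test
  test_sup : ∀ t ∈ Test, ∀ t' ∈ Test, t ⊔ t' ∈ Test
  tneg : C → C
  tneg_test : ∀ t ∈ Test, tneg t ∈ Test
  nil_le_test : ∀ t ∈ Test, nil ≤ t
  tneg_sup : ∀ t ∈ Test, t ⊔ tneg t = ⊤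
  tneg_inf : ∀ t ∈ Test, t ⊓ tneg t = nil
  test_interchange : ∀ t ∈ Test, ∀ t' ∈ Test, ∀ c d : C,
    seq t c ⊔ seq t' d = seq (t ⊔ t') (c ⊔ d)
  /-- the synchronisation operator `⊗` -/
  sync : C → C → C
  /-- the identity command of `⊗` -/
  one : C
  /-- the atomic-step identity of `⊗` -/
  aone : C
  aone_atomic : aone ∈ Atomic
  sync_assoc : ∀ c₀ c₁ c₂ : C, sync c₀ (sync c₁ c₂) = sync (sync c₀ c₁) c₂
  sync_comm : ∀ c d : C, sync c d = sync d c
  sync_one : ∀ c : C, sync c one = c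
  /-- `⊗` distributes over non-empty nondeterministic choices -/
  sync_sInf : ∀ (c : C) (S : Set C), S.Nonempty →
    sync c (sInf S) = ⨅ d ∈ S, sync c d
  /-- atomic steps are closed under `⊗` -/
  sync_atomic : ∀ a ∈ Atomic, ∀ b ∈ Atomic, sync a b ∈ Atomic
  sync_aone : ∀ a ∈ Atomic, sync a aone = a
  /-- weak interchange: `c₀;c₁ ⊗ d₀;d₁ ⊑ (c₀⊗d₀);(c₁⊗d₁)` -/
  sync_weak_interchange : ∀ c₀ c₁ d₀ d₁ : C,
    sync (seq c₀ c₁) (seq d₀ d₁) ≤ seq (sync c₀ d₀) (sync c₁ d₁)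
  /-- atomic interchange: `(a;c) ⊗ (b;d) = (a⊗b);(c⊗d)` for atomic `a`, `b` -/
  atomic_sync_interchange : ∀ a ∈ Atomic, ∀ b ∈ Atomic, ∀ c d : C,
    sync (seq a c) (seq b d) = seq (sync a b) (sync c d)
  /-- `a^∞ ⊗ b^∞ = (a⊗b)^∞` for atomic `a`, `b` -/
  sync_infIter : ∀ a ∈ Atomic, ∀ b ∈ Atomic,
    sync (toDRA.infIter a) (toDRA.infIter b) = toDRA.infIter (sync a b)
  /-- `nil ⊗ nil = nil` -/
  nil_sync_nil : sync nil nil = nil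
  /-- `(a;c) ⊗ nil = ⊤` for atomic `a` -/
  atomic_seq_sync_nil : ∀ a ∈ Atomic, ∀ c : C, sync (seq a c) nil = ⊤
  /-- tests distribute over `⊗`: `t;c ⊗ t;d = t;(c ⊗ d)` -/
  test_sync_interchange : ∀ t ∈ Test, ∀ c d : C,
    sync (seq t c) (seq t d) = seq t (sync c d)


namespace SRA

variable {C : Type*} [CompleteLattice C] (A : SRA C)

lemma top_seq' (x : C) : A.seq ⊤ x = ⊤ := by
  have h := A.seq_sInf_right ∅ x
  simpa using h

lemma seq_mono_left' {x y : C} (h : x ≤ y) (d : C) : A.seq x d ≤ A.seq y d := by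
  have hd := A.seq_sInf_right {x, y} d
  rw [sInf_pair, inf_eq_left.mpr h, iInf_pair] at hd
  rw [hd]; exact inf_le_right

lemma seq_mono_right' {x y : C} (h : x ≤ y) (c : C) : A.seq c x ≤ A.seq c y := by
  have hd := A.seq_sInf_left c {x, y} ⟨x, by simp⟩
  rw [sInf_pair, inf_eq_left.mpr h, iInf_pair] at hd
  rw [hd]; exact inf_le_right

lemma sync_inf' (c x y : C) : A.sync c (x ⊓ y) = A.sync c x ⊓ A.sync c y := by
  have h := A.sync_sInf c {x, y} ⟨x, by simp⟩
  rwa [sInf_pair, iInf_pair] at h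

lemma sync_mono_right' {x y : C} (h : x ≤ y) (c : C) : A.sync c x ≤ A.sync c y := by
  have hd := A.sync_inf' c x y
  rw [inf_eq_left.mpr h] at hd
  rw [hd]; exact inf_le_right

lemma sync_mono_left' {x y : C} (h : x ≤ y) (c : C) : A.sync x c ≤ A.sync y c := by
  rw [A.sync_comm x c, A.sync_comm y c]; exact A.sync_mono_right' h c

lemma sync_inf_left' (x y c : C) : A.sync (x ⊓ y) c = A.sync x c ⊓ A.sync y c := by
  rw [A.sync_comm, A.sync_inf', A.sync_comm c x, A.sync_comm c y]

lemma test_decompose {t : C} (ht : t ∈ A.Test) (X : C) :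
    X = A.seq t X ⊓ A.seq (A.tneg t) X := by
  have h := A.seq_sInf_right {t, A.tneg t} X
  rwa [sInf_pair, A.tneg_inf t ht, iInf_pair, A.nil_seq] at h

lemma tneg_seq_test {t : C} (ht : t ∈ A.Test) : A.seq (A.tneg t) t = ⊤ := by
  refine le_antisymm le_top ?_
  rw [← A.tneg_sup t ht]
  refine sup_le ?_ ?_
  · calc t = A.seq A.nil t := (A.nil_seq t).symm
      _ ≤ _ := A.seq_mono_left' (A.nil_le_test _ (A.tneg_test t ht)) t
  · calc A.tneg t = A.seq (A.tneg t) A.nil := (A.seq_nil _).symm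
      _ ≤ _ := A.seq_mono_right' (A.nil_le_test t ht) _

lemma test_seq_tneg {t : C} (ht : t ∈ A.Test) : A.seq t (A.tneg t) = ⊤ := by
  refine le_antisymm le_top ?_
  rw [← A.tneg_sup t ht]
  refine sup_le ?_ ?_
  · calc t = A.seq t A.nil := (A.seq_nil _).symm
      _ ≤ _ := A.seq_mono_right' (A.nil_le_test _ (A.tneg_test t ht)) _
  · calc A.tneg t = A.seq A.nil (A.tneg t) := (A.nil_seq _).symm
      _ ≤ _ := A.seq_mono_left' (A.nil_le_test t ht) _

lemma test_seq_self {t : C} (ht : t ∈ A.Test) : A.seq t t = t := by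
  have h := A.test_decompose ht t
  rw [A.tneg_seq_test ht, inf_top_eq] at h
  exact h.symm

lemma test_seq_top {t : C} (ht : t ∈ A.Test) : A.seq t ⊤ = ⊤ := by
  refine le_antisymm le_top ?_
  calc (⊤ : C) = A.seq A.nil ⊤ := (A.nil_seq ⊤).symm
    _ ≤ _ := A.seq_mono_left' (A.nil_le_test t ht) ⊤

lemma sync_top_nil : A.sync ⊤ A.nil = ⊤ := by
  have h := A.atomic_seq_sync_nil ⊤ A.top_atomic ⊥
  rwa [A.top_seq'] at h

lemma sync_nil_top : A.sync A.nil ⊤ = ⊤ := by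
  rw [A.sync_comm]; exact A.sync_top_nil

lemma sync_top_of_shape {c : C}
    (hc : c ∈ A.Test ∨ (∃ a ∈ A.Atomic, ∃ c' : C, c = A.seq a c') ∨ A.one ≤ c) :
    A.sync c ⊤ = ⊤ := by
  rcases hc with hct | ⟨a, ha, c', rfl⟩ | hone
  · calc A.sync c ⊤ = A.sync (A.seq c A.nil) (A.seq c ⊤) := by
          rw [A.seq_nil, A.test_seq_top hct]
      _ = A.seq c (A.sync A.nil ⊤) := A.test_sync_interchange c hct _ _
      _ = ⊤ := by rw [A.sync_nil_top, A.test_seq_top hct]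
  · refine le_antisymm le_top ?_
    calc (⊤ : C) = A.sync (A.seq a c') A.nil := (A.atomic_seq_sync_nil a ha c').symm
      _ ≤ _ := A.sync_mono_right' le_top _
  · refine le_antisymm le_top ?_
    calc (⊤ : C) = A.sync ⊤ A.one := (A.sync_one ⊤).symm
      _ = A.sync A.one ⊤ := A.sync_comm _ _
      _ ≤ _ := A.sync_mono_left' hone ⊤

end SRA

/-- For a command `c` that is a test, or has a leading atomic step, or refines
the identity of `⊗`, tests distribute over synchronisation:
`c ⊗ (t;d) = t;(c ⊗ d)`. -/
theorem test_command_sync_command {C : Type*} [CompleteLattice C] (A : SRA C)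
    (c : C)
    (hc : c ∈ A.Test ∨ (∃ a ∈ A.Atomic, ∃ c' : C, c = A.seq a c') ∨ A.one ≤ c) :
    ∀ t ∈ A.Test, ∀ d : C, A.sync c (A.seq t d) = A.seq t (A.sync c d) :=  by
  intro t ht d
  have hnt : A.tneg t ∈ A.Test := A.tneg_test t ht
  have hcT : A.sync c ⊤ = ⊤ := A.sync_top_of_shape hc
  -- (¬t;c) ⊗ ⊤ = ⊤
  have hB : A.sync (A.seq (A.tneg t) c) ⊤ = ⊤ := by
    calc A.sync (A.seq (A.tneg t) c) ⊤
        = A.sync (A.seq (A.tneg t) c) (A.seq (A.tneg t) ⊤) := by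
          rw [A.test_seq_top hnt]
      _ = A.seq (A.tneg t) (A.sync c ⊤) := A.test_sync_interchange _ hnt c ⊤
      _ = ⊤ := by rw [hcT, A.test_seq_top hnt]
  set N := A.sync (A.seq (A.tneg t) c) (A.seq t d) with hNdef
  have htN : A.seq t N = A.sync ⊤ (A.seq t d) := by
    calc A.seq t N
        = A.sync (A.seq t (A.seq (A.tneg t) c)) (A.seq t (A.seq t d)) :=
          (A.test_sync_interchange t ht _ _).symm
      _ = A.sync ⊤ (A.seq t d) := by
          rw [← A.seq_assoc, ← A.seq_assoc, A.test_seq_tneg ht, A.top_seq',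
            A.test_seq_self ht]
  have hntN : A.seq (A.tneg t) N = ⊤ := by
    calc A.seq (A.tneg t) N
        = A.sync (A.seq (A.tneg t) (A.seq (A.tneg t) c))
            (A.seq (A.tneg t) (A.seq t d)) :=
          (A.test_sync_interchange _ hnt _ _).symm
      _ = A.sync (A.seq (A.tneg t) c) ⊤ := by
          rw [← A.seq_assoc, ← A.seq_assoc, A.test_seq_self hnt,
            A.tneg_seq_test ht, A.top_seq']
      _ = ⊤ := hB
  have hNval : N = A.sync ⊤ (A.seq t d) := by
    conv_lhs => rw [A.test_decompose ht N]
    rw [hntN, inf_top_eq, htN]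
  have hge : A.seq t (A.sync c d) ≤ N := by
    rw [hNval, ← A.test_sync_interchange t ht c d]
    exact A.sync_mono_left' le_top _
  calc A.sync c (A.seq t d)
      = A.sync (A.seq t c ⊓ A.seq (A.tneg t) c) (A.seq t d) := by
        rw [← A.test_decompose ht c]
    _ = A.sync (A.seq t c) (A.seq t d) ⊓ N := A.sync_inf_left' _ _ _
    _ = A.seq t (A.sync c d) ⊓ N := by rw [A.test_sync_interchange t ht]
    _ = A.seq t (A.sync c d) := inf_eq_left.mpr hge
end

section
/- In a synchronous refinement algebra, the synchronisation of two tests equals their join: t ⊗ t' = t ⊔ t' for all tests t, t'. -/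
namespace SRAAux

variable {C : Type*} [CompleteLattice C] (A : SRA C)

lemma top_seq (c : C) : A.seq ⊤ c = ⊤ := by
  have h := A.seq_sInf_right ∅ c
  simpa using h

lemma seq_inf (x y c : C) : A.seq (x ⊓ y) c = A.seq x c ⊓ A.seq y c := by
  have h := A.seq_sInf_right ({x, y} : Set C) c
  rw [iInf_pair] at h
  simpa [sInf_insert] using h

lemma sync_inf (c x y : C) : A.sync c (x ⊓ y) = A.sync c x ⊓ A.sync c y := by
  have h := A.sync_sInf c ({x, y} : Set C) ⟨x, by simp⟩
  rw [iInf_pair] at h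
  simpa [sInf_insert] using h

lemma sync_mono_right (c : C) : Monotone (A.sync c) := by
  intro x y h
  have hs : sInf ({x, y} : Set C) = x := by
    simp [sInf_insert, inf_eq_left.mpr h]
  have hd := A.sync_sInf c {x, y} ⟨x, by simp⟩
  rw [hs, iInf_pair] at hd
  rw [hd]
  exact inf_le_right

lemma sync_mono_left (d : C) {x y : C} (h : x ≤ y) : A.sync x d ≤ A.sync y d := by
  rw [A.sync_comm x d, A.sync_comm y d]
  exact sync_mono_right A d h

/-- dual distributivity, derived from `inf_sup_distrib` -/
lemma supInfDistrib (A : SRA C) (a x y : C) : a ⊔ (x ⊓ y) = (a ⊔ x) ⊓ (a ⊔ y) := by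
  have h1 : (a ⊔ x) ⊓ (a ⊔ y) = ((a ⊔ x) ⊓ a) ⊔ ((a ⊔ x) ⊓ y) :=
    A.toAtomicDRA.toDRA.inf_sup_distrib (a ⊔ x) a y
  have h2 : (a ⊔ x) ⊓ a = a := inf_eq_right.mpr le_sup_left
  have h3 : (a ⊔ x) ⊓ y = (y ⊓ a) ⊔ (y ⊓ x) := by
    rw [inf_comm]; exact A.toAtomicDRA.toDRA.inf_sup_distrib y a x
  rw [h1, h2, h3, ← sup_assoc]
  have h4 : a ⊔ (y ⊓ a) = a := sup_eq_left.mpr inf_le_right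
  rw [h4, inf_comm y x]

/-- sequential composition of tests is their join -/
lemma test_seq {t t' : C} (ht : t ∈ A.Test) (ht' : t' ∈ A.Test) :
    A.seq t t' = t ⊔ t' := by
  have hneg : A.tneg t ∈ A.Test := A.tneg_test t ht
  have hdec : t' = A.seq t t' ⊓ A.seq (A.tneg t) t' := by
    conv_lhs => rw [← A.nil_seq t', ← A.tneg_inf t ht]
    exact seq_inf A t (A.tneg t) t'
  have hnil : A.nil ⊔ t' = t' := sup_eq_right.mpr (A.nil_le_test t' ht')
  have h1 : t ⊔ A.seq t t' = A.seq t t' := by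
    have := A.test_interchange t ht t ht A.nil t'
    rw [A.seq_nil, sup_idem, hnil] at this
    exact this
  have h2 : t ⊔ A.seq (A.tneg t) t' = ⊤ := by
    have := A.test_interchange t ht (A.tneg t) hneg A.nil t'
    rw [A.seq_nil, A.tneg_sup t ht, hnil, top_seq] at this
    exact this
  calc A.seq t t' = (t ⊔ A.seq t t') ⊓ (t ⊔ A.seq (A.tneg t) t') := by
        rw [h1, h2, inf_top_eq]
    _ = t ⊔ (A.seq t t' ⊓ A.seq (A.tneg t) t') := (supInfDistrib A _ _ _).symm
    _ = t ⊔ t' := by rw [← hdec]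

lemma sync_nil_top : A.sync A.nil ⊤ = ⊤ := by
  have h := A.atomic_seq_sync_nil ⊤ A.top_atomic ⊥
  rw [top_seq] at h
  rw [A.sync_comm]
  exact h

/-- a test synchronised with `⊤` is `⊤` -/
lemma test_sync_top {t : C} (ht : t ∈ A.Test) : A.sync t ⊤ = ⊤ := by
  have h : A.sync A.nil ⊤ ≤ A.sync t ⊤ :=
    sync_mono_left A ⊤ (A.nil_le_test t ht)
  rw [sync_nil_top] at h
  exact top_le_iff.mp h

/-- a test synchronised with itself is itself -/
lemma test_sync_self {t : C} (ht : t ∈ A.Test) : A.sync t t = t := by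
  have h := A.test_sync_interchange t ht A.nil A.nil
  rw [A.seq_nil, A.nil_sync_nil, A.seq_nil] at h
  exact h

/-- `nil ⊗ t = t` for a test `t` -/
lemma nil_sync_test {t : C} (ht : t ∈ A.Test) : A.sync A.nil t = t := by
  have hneg : A.tneg t ∈ A.Test := A.tneg_test t ht
  set S := A.sync A.nil t with hS
  have htt : A.seq t t = t := by rw [test_seq A ht ht, sup_idem]
  have h1 : A.seq t S = t := by
    have := A.test_sync_interchange t ht A.nil t
    rw [A.seq_nil, htt, test_sync_self A ht] at this
    exact this.symm
  have h2 : A.seq (A.tneg t) S = ⊤ := by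
    have := A.test_sync_interchange (A.tneg t) hneg A.nil t
    rw [A.seq_nil, test_seq A hneg ht, sup_comm, A.tneg_sup t ht,
      test_sync_top A hneg] at this
    exact this.symm
  calc S = A.seq A.nil S := (A.nil_seq S).symm
    _ = A.seq (t ⊓ A.tneg t) S := by rw [A.tneg_inf t ht]
    _ = A.seq t S ⊓ A.seq (A.tneg t) S := seq_inf A _ _ _
    _ = t := by rw [h1, h2, inf_top_eq]

end SRAAux

/-- Synchronisation of tests equals their join: `t ⊗ t' = t ⊔ t'`. -/
theorem test_sync_test {C : Type*} [CompleteLattice C] (A : SRA C) :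
    ∀ t ∈ A.Test, ∀ t' ∈ A.Test, A.sync t t' = t ⊔ t' := by
  intro t ht t' ht'
  have hsup : t ⊔ t' ∈ A.Test := A.test_sup t ht t' ht'
  apply le_antisymm
  · calc A.sync t t' ≤ A.sync (t ⊔ t') t' :=
          SRAAux.sync_mono_left A t' le_sup_left
      _ ≤ A.sync (t ⊔ t') (t ⊔ t') :=
          SRAAux.sync_mono_right A _ le_sup_right
      _ = t ⊔ t' := SRAAux.test_sync_self A hsup
  · apply sup_le
    · have h : A.sync t A.nil ≤ A.sync t t' :=
        SRAAux.sync_mono_right A t (A.nil_le_test t' ht')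
      rwa [A.sync_comm, SRAAux.nil_sync_test A ht] at h
    · have h : A.sync A.nil t' ≤ A.sync t t' :=
        SRAAux.sync_mono_left A t' (A.nil_le_test t ht)
      rwa [SRAAux.nil_sync_test A ht'] at h
end

section
/- In a synchronous refinement algebra with conjunctive sequential composition, for atomic steps a, b and commands c, d: (a⋆;c) ⊗ (b⋆;d) = (a ⊗ b)⋆;((c ⊗ b⋆;d) ⊓ (a⋆;c ⊗ d)). -/
namespace DRA

variable {C : Type*} [CompleteLattice C] (A : DRA C)

theorem seq_iInf_right' (f : ℕ → C) (d : C) :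
    A.seq (⨅ n, f n) d = ⨅ n, A.seq (f n) d := by
  rw [← sInf_range, A.seq_sInf_right, iInf_range]

theorem seq_iInf_left' (c : C) (f : ℕ → C) :
    A.seq c (⨅ n, f n) = ⨅ n, A.seq c (f n) := by
  rw [← sInf_range, A.seq_sInf_left c _ (Set.range_nonempty f), iInf_range]

theorem seq_inf (c x y : C) : A.seq c (x ⊓ y) = A.seq c x ⊓ A.seq c y := by
  have h := A.seq_sInf_left c {x, y} ⟨x, by simp⟩
  rw [sInf_pair, iInf_pair] at h
  exact h

theorem fiter_eq_iInf_pow (c : C) : A.fiter c = ⨅ n, A.pow c n := by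
  have hfix : A.fiter c = A.nil ⊓ A.seq c (A.fiter c) :=
    (OrderHom.map_gfp (A.iterFun c)).symm
  apply le_antisymm
  · apply le_iInf; intro n
    induction n with
    | zero => rw [hfix]; exact inf_le_left
    | succ n ih =>
      calc A.fiter c ≤ A.seq c (A.fiter c) := le_trans (le_of_eq hfix) inf_le_right
        _ ≤ A.seq c (A.pow c n) := A.seq_mono_right c ih
  · apply OrderHom.le_gfp
    show (⨅ n, A.pow c n) ≤ A.nil ⊓ A.seq c (⨅ n, A.pow c n)
    rw [A.seq_iInf_left']
    refine le_inf (iInf_le _ 0) (le_iInf fun n => iInf_le _ (n + 1))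

theorem pow_add (c : C) (m n : ℕ) :
    A.pow c (m + n) = A.seq (A.pow c m) (A.pow c n) := by
  induction m with
  | zero => simp [pow, A.nil_seq]
  | succ m ih =>
    have : m + 1 + n = (m + n) + 1 := by omega
    rw [this]
    show A.seq c (A.pow c (m + n)) = A.seq (A.seq c (A.pow c m)) (A.pow c n)
    rw [ih, A.seq_assoc]

end DRA

namespace SRA

variable {C : Type*} [CompleteLattice C] (A : SRA C)

theorem sync_iInf' (c : C) (f : ℕ → C) :
    A.sync c (⨅ n, f n) = ⨅ n, A.sync c (f n) := by
  rw [← sInf_range, A.sync_sInf c _ (Set.range_nonempty f), iInf_range]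

theorem syncPow {a b : C} (ha : a ∈ A.Atomic) (hb : b ∈ A.Atomic) (c d : C) :
    ∀ k, A.sync (A.seq (A.pow a k) c) (A.seq (A.pow b k) d)
      = A.seq (A.pow (A.sync a b) k) (A.sync c d) := by
  intro k
  induction k with
  | zero => simp [DRA.pow, A.nil_seq]
  | succ k ih =>
    show A.sync (A.seq (A.seq a (A.pow a k)) c) (A.seq (A.seq b (A.pow b k)) d)
      = A.seq (A.seq (A.sync a b) (A.pow (A.sync a b) k)) (A.sync c d)
    rw [A.seq_assoc, A.seq_assoc, A.seq_assoc,
      A.atomic_sync_interchange a ha b hb, ih]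

end SRA

/-- Synchronising finite iterations:
`(a⋆;c) ⊗ (b⋆;d) = (a⊗b)⋆;((c ⊗ b⋆;d) ⊓ (a⋆;c ⊗ d))`. -/
theorem atomic_iteration_finite {C : Type*} [CompleteLattice C] (A : SRA C) :
    ∀ a ∈ A.Atomic, ∀ b ∈ A.Atomic, ∀ c d : C,
      A.sync (A.seq (A.fiter a) c) (A.seq (A.fiter b) d) =
        A.seq (A.fiter (A.sync a b))
          (A.sync c (A.seq (A.fiter b) d) ⊓ A.sync (A.seq (A.fiter a) c) d) := by
  intro a ha b hb c d
  set s := A.sync a b with hs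
  -- expand finite iterations into infima of powers
  have hfa : A.seq (A.fiter a) c = ⨅ m, A.seq (A.pow a m) c := by
    rw [A.fiter_eq_iInf_pow, A.seq_iInf_right']
  have hfb : A.seq (A.fiter b) d = ⨅ n, A.seq (A.pow b n) d := by
    rw [A.fiter_eq_iInf_pow, A.seq_iInf_right']
  -- terms
  set T : ℕ → ℕ → C := fun k j => A.seq (A.pow s k) (A.sync c (A.seq (A.pow b j) d)) with hT
  set S : ℕ → ℕ → C := fun k j => A.seq (A.pow s k) (A.sync (A.seq (A.pow a j) c) d) with hS
  have sync_iInf_left : ∀ (f : ℕ → C) (x : C),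
      A.sync (⨅ n, f n) x = ⨅ n, A.sync (f n) x := by
    intro f x
    rw [A.sync_comm, A.sync_iInf']
    exact iInf_congr fun n => A.sync_comm x (f n)
  have hL : A.sync (A.seq (A.fiter a) c) (A.seq (A.fiter b) d)
      = ⨅ m, ⨅ n, A.sync (A.seq (A.pow a m) c) (A.seq (A.pow b n) d) := by
    rw [hfa, hfb, sync_iInf_left]
    exact iInf_congr fun m => A.sync_iInf' _ _
  have hLT : ∀ m j,
      A.sync (A.seq (A.pow a m) c) (A.seq (A.pow b (m + j)) d) = T m j := by
    intro m j
    rw [A.pow_add, A.seq_assoc, A.syncPow ha hb]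
  have hLS : ∀ n j,
      A.sync (A.seq (A.pow a (n + j)) c) (A.seq (A.pow b n) d) = S n j := by
    intro n j
    rw [A.pow_add, A.seq_assoc, A.syncPow ha hb]
  have hR : A.seq (A.fiter s)
        (A.sync c (A.seq (A.fiter b) d) ⊓ A.sync (A.seq (A.fiter a) c) d)
      = ⨅ k, ((⨅ j, T k j) ⊓ (⨅ j, S k j)) := by
    rw [A.fiter_eq_iInf_pow, A.seq_iInf_right']
    refine iInf_congr fun k => ?_
    rw [A.seq_inf]
    congr 1
    · rw [hfb, A.sync_iInf', A.seq_iInf_left']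
    · rw [hfa, sync_iInf_left, A.seq_iInf_left']
  rw [hL, hR]
  apply le_antisymm
  · refine le_iInf fun k => le_inf (le_iInf fun j => ?_) (le_iInf fun j => ?_)
    · exact le_trans (iInf_le _ k) (le_trans (iInf_le _ (k + j)) (le_of_eq (hLT k j)))
    · exact le_trans (iInf_le _ (k + j)) (le_trans (iInf_le _ k) (le_of_eq (hLS k j)))
  · refine le_iInf fun m => le_iInf fun n => ?_
    rcases le_total m n with hmn | hnm
    · have h := hLT m (n - m)
      rw [Nat.add_sub_cancel' hmn] at h
      rw [h]
      exact le_trans (iInf_le _ m) (le_trans inf_le_left (iInf_le _ (n - m)))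
    · have h := hLS n (m - n)
      rw [Nat.add_sub_cancel' hnm] at h
      rw [h]
      exact le_trans (iInf_le _ n) (le_trans inf_le_right (iInf_le _ (m - n)))
end
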